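/- In the affine root-system setting below, let θ : U → U be an affine bijection permuting the set ℋ of hyperplanes, let F be a facette with θ(F) = F, let λ ∈ U satisfy α(λ) ∈ ℤ for every α ∈ R, and let 𝒞 be an alcove whose closure contains F. Assume (F, λ, 𝒞) is in good position, i.e. for every α ∈ R_{F,θ} one has α(λ) > 0. Then the number of hyperplanes in ℋ separating 𝒞 from t_λ(𝒞) equals the number of hyperplanes in ℋ separating 𝒞 from t_λ(θ(𝒞)) plus the number of hyperplanes in ℋ separating 𝒞 from θ(𝒞). -/
import Mathlib


open Set

/-- The affine hyperplane `H_{α,k} = {x | α x = k}`. -/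
def rootHyperplane {U : Type*} [AddCommGroup U] [Module ℝ U]
    (α : U →ₗ[ℝ] ℝ) (k : ℤ) : Set U :=
  {x | α x = (k : ℝ)}

/-- The collection `ℋ` of all affine root hyperplanes of a root system `R`. -/
def rootHyperplanes {U : Type*} [AddCommGroup U] [Module ℝ U]
    (R : Set (U →ₗ[ℝ] ℝ)) : Set (Set U) :=
  {H | ∃ α ∈ R, ∃ k : ℤ, H = rootHyperplane α k}

/-- `C` is an alcove: a connected component of the complement of the union of
the hyperplanes. -/
def IsAlcove {U : Type*} [AddCommGroup U] [Module ℝ U] [TopologicalSpace U]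
    (R : Set (U →ₗ[ℝ] ℝ)) (C : Set U) : Prop :=
  ∃ x ∈ (⋃₀ rootHyperplanes R)ᶜ, C = connectedComponentIn (⋃₀ rootHyperplanes R)ᶜ x

/-- `F` is a facette: an equivalence class of the relation « for every `α ∈ R` and
`k ∈ ℤ`, the numbers `α x - k` and `α y - k` are both zero, both positive or both
negative ». -/
def IsFacette {U : Type*} [AddCommGroup U] [Module ℝ U]
    (R : Set (U →ₗ[ℝ] ℝ)) (F : Set U) : Prop :=
  ∃ x : U, F = {y | ∀ α ∈ R, ∀ k : ℤ,
    (α x = (k : ℝ) ↔ α y = (k : ℝ)) ∧ ((k : ℝ) < α x ↔ (k : ℝ) < α y)}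

/-- The hyperplane `H` separates `C` from `C'`: it is of the form `H_{α,k}` with
`α - k` positive on one of them and negative on the other. -/
def SeparatesIn {U : Type*} [AddCommGroup U] [Module ℝ U]
    (R : Set (U →ₗ[ℝ] ℝ)) (H C C' : Set U) : Prop :=
  ∃ α ∈ R, ∃ k : ℤ, H = rootHyperplane α k ∧
    (((∀ x ∈ C, (k : ℝ) < α x) ∧ (∀ x ∈ C', α x < (k : ℝ))) ∨
     ((∀ x ∈ C, α x < (k : ℝ)) ∧ (∀ x ∈ C', (k : ℝ) < α x)))

/-- The number of hyperplanes of `ℋ` separating `C` from `C'`. -/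
noncomputable def sepCount {U : Type*} [AddCommGroup U] [Module ℝ U]
    (R : Set (U →ₗ[ℝ] ℝ)) (C C' : Set U) : ℕ :=
  {H : Set U | H ∈ rootHyperplanes R ∧ SeparatesIn R H C C'}.ncard

section AuxLemmas

variable {U : Type*} [NormedAddCommGroup U] [NormedSpace ℝ U] [FiniteDimensional ℝ U]

lemma rootHyperplane_neg (α : U →ₗ[ℝ] ℝ) (k : ℤ) :
    rootHyperplane (-α) (-k) = rootHyperplane α k := by
  ext x
  simp only [rootHyperplane, mem_setOf_eq, LinearMap.neg_apply, Int.cast_neg]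
  constructor <;> intro h <;> linarith

lemma hyperplane_rigidity {R : Finset (U →ₗ[ℝ] ℝ)}
    (hR0 : (0 : U →ₗ[ℝ] ℝ) ∉ R)
    (hreduced : ∀ α ∈ R, ∀ β ∈ R, ∀ c : ℝ, β = c • α → β = α ∨ β = -α)
    {α β : U →ₗ[ℝ] ℝ} {k l : ℤ} (hα : α ∈ R) (hβ : β ∈ R)
    (h : rootHyperplane α k = rootHyperplane β l) :
    (β = α ∧ l = k) ∨ (β = -α ∧ l = -k) := by
  have hα0 : α ≠ 0 := fun h0 => hR0 (h0 ▸ hα)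
  obtain ⟨u, hu⟩ : ∃ u, α u ≠ 0 := by
    by_contra hcon; push_neg at hcon
    exact hα0 (LinearMap.ext fun x => by simp [hcon x])
  set y := (α u)⁻¹ • u with hy
  have hαy : α y = 1 := by simp [hy, inv_mul_cancel₀ hu]
  set x₀ := (k : ℝ) • y with hx₀def
  have hx₀ : α x₀ = (k : ℝ) := by simp [hx₀def, hαy]
  have hmem : x₀ ∈ rootHyperplane α k := hx₀
  rw [h] at hmem
  have hβx₀ : β x₀ = (l : ℝ) := hmem
  have hker : ∀ v, α v = 0 → β v = 0 := by
    intro v hv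
    have h1 : (x₀ + v) ∈ rootHyperplane α k := by
      show α (x₀ + v) = (k : ℝ); rw [map_add, hv, hx₀, add_zero]
    rw [h] at h1
    have h2 : β x₀ + β v = (l : ℝ) := by rw [← map_add]; exact h1
    linarith
  have hprop : β = (β y) • α := by
    ext x
    have h1 : α (x - (α x) • y) = 0 := by
      rw [map_sub, map_smul, hαy]; simp
    have h2 := hker _ h1
    rw [map_sub, map_smul, smul_eq_mul] at h2
    simp only [LinearMap.smul_apply, smul_eq_mul]
    linarith [mul_comm (α x) (β y)]
  rcases hreduced α hα β hβ _ hprop with h1 | h1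
  · left; refine ⟨h1, ?_⟩
    have : (l : ℝ) = (k : ℝ) := by rw [← hβx₀, h1, hx₀]
    exact_mod_cast this
  · right; refine ⟨h1, ?_⟩
    have : (l : ℝ) = -(k : ℝ) := by
      rw [← hβx₀, h1]; simp [hx₀]
    rw [← Int.cast_neg] at this
    exact_mod_cast this

lemma strip_of_preconnected {S : Set U} (hS : IsPreconnected S) (α : U →ₗ[ℝ] ℝ)
    (hsep : ∀ x ∈ S, ∀ k : ℤ, α x ≠ (k : ℝ)) {x₀ : U} (hx₀ : x₀ ∈ S) :
    ∀ x ∈ S, ((⌊α x₀⌋ : ℤ) : ℝ) < α x ∧ α x < ((⌊α x₀⌋ : ℤ) : ℝ) + 1 := by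
  intro x hx
  have hcont : Continuous α := α.continuous_of_finiteDimensional
  have himg : IsPreconnected (α '' S) := hS.image _ hcont.continuousOn
  have hoc := himg.ordConnected
  constructor
  · by_contra hle; push_neg at hle
    have hmem : ((⌊α x₀⌋ : ℤ) : ℝ) ∈ α '' S :=
      hoc.out (mem_image_of_mem _ hx) (mem_image_of_mem _ hx₀) ⟨hle, Int.floor_le _⟩
    obtain ⟨y, hyS, hy⟩ := hmem
    exact hsep y hyS _ hy
  · by_contra hle; push_neg at hle
    have hmem : ((⌊α x₀⌋ : ℤ) : ℝ) + 1 ∈ α '' S :=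
      hoc.out (mem_image_of_mem _ hx₀) (mem_image_of_mem _ hx)
        ⟨(Int.lt_floor_add_one (α x₀)).le, hle⟩
    obtain ⟨y, hyS, hy⟩ := hmem
    refine hsep y hyS (⌊α x₀⌋ + 1) ?_
    rw [hy]; push_cast; ring
end AuxLemmas

section CountLemma
variable {U : Type*} [NormedAddCommGroup U] [NormedSpace ℝ U] [FiniteDimensional ℝ U]

lemma sepCount_eq_sum {R : Finset (U →ₗ[ℝ] ℝ)}
    (hR0 : (0 : U →ₗ[ℝ] ℝ) ∉ R)
    (hRneg : ∀ α ∈ R, -α ∈ R)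
    (hreduced : ∀ α ∈ R, ∀ β ∈ R, ∀ c : ℝ, β = c • α → β = α ∨ β = -α)
    {S S' : Set U} (hS : S.Nonempty) (hS' : S'.Nonempty)
    (m m' : (U →ₗ[ℝ] ℝ) → ℤ)
    (hm : ∀ α ∈ R, ∀ x ∈ S, ((m α : ℤ) : ℝ) < α x ∧ α x < ((m α : ℤ) : ℝ) + 1)
    (hm' : ∀ α ∈ R, ∀ x ∈ S', ((m' α : ℤ) : ℝ) < α x ∧ α x < ((m' α : ℤ) : ℝ) + 1) :
    sepCount (R : Set (U →ₗ[ℝ] ℝ)) S S' = ∑ α ∈ R, (m' α - m α).toNat := by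
  classical
  set T : Finset (Σ _ : U →ₗ[ℝ] ℝ, ℤ) := R.sigma (fun α => Finset.Ioc (m α) (m' α)) with hT
  have hTmem : ∀ p : Σ _ : U →ₗ[ℝ] ℝ, ℤ, p ∈ T ↔ p.1 ∈ R ∧ m p.1 < p.2 ∧ p.2 ≤ m' p.1 := by
    rintro ⟨a, k⟩
    simp [hT, Finset.mem_sigma, Finset.mem_Ioc, and_assoc]
  set e : (Σ _ : U →ₗ[ℝ] ℝ, ℤ) → Set U := fun p => rootHyperplane p.1 p.2 with he
  -- orientation facts for members of T
  have factS : ∀ p : Σ _ : U →ₗ[ℝ] ℝ, ℤ, p ∈ T → ∀ x ∈ S, p.1 x < (p.2 : ℝ) := by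
    intro p hp x hx
    obtain ⟨h1, h2, _⟩ := (hTmem p).1 hp
    have hb := (hm p.1 h1 x hx).2
    have : ((m p.1 : ℤ) : ℝ) + 1 ≤ (p.2 : ℝ) := by exact_mod_cast (by omega : m p.1 + 1 ≤ p.2)
    linarith
  have factS' : ∀ p : Σ _ : U →ₗ[ℝ] ℝ, ℤ, p ∈ T → ∀ x ∈ S', (p.2 : ℝ) < p.1 x := by
    intro p hp x hx
    obtain ⟨h1, _, h2⟩ := (hTmem p).1 hp
    have hb := (hm' p.1 h1 x hx).1
    have : (p.2 : ℝ) ≤ ((m' p.1 : ℤ) : ℝ) := by exact_mod_cast h2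
    linarith
  have hset : {H : Set U | H ∈ rootHyperplanes (R : Set (U →ₗ[ℝ] ℝ)) ∧
      SeparatesIn (R : Set (U →ₗ[ℝ] ℝ)) H S S'} = e '' (T : Set (Σ _ : U →ₗ[ℝ] ℝ, ℤ)) := by
    ext H
    constructor
    · rintro ⟨-, α, hα, k, rfl, hcase⟩
      have hαR : α ∈ R := hα
      rcases hcase with ⟨h1, h2⟩ | ⟨h1, h2⟩
      · -- k < α on S, α < k on S' ; use (-α, -k)
        have hnegR : -α ∈ R := hRneg α hαR
        refine ⟨⟨-α, -k⟩, ?_, (rootHyperplane_neg α k)⟩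
        rw [Finset.mem_coe, hTmem]
        obtain ⟨xs, hxs⟩ := hS
        obtain ⟨xs', hxs'⟩ := hS'
        have hb1 := (hm (-α) hnegR xs hxs).1
        have hb2 := (hm' (-α) hnegR xs' hxs').2
        simp only [LinearMap.neg_apply] at hb1 hb2
        have hk1 := h1 xs hxs
        have hk2 := h2 xs' hxs'
        refine ⟨hnegR, ?_, ?_⟩
        · show m (-α) < -k
          exact_mod_cast (by push_cast; linarith : ((m (-α) : ℤ) : ℝ) < ((-k : ℤ) : ℝ))
        · show -k ≤ m' (-α)
          have : ((-k : ℤ) : ℝ) < ((m' (-α) : ℤ) : ℝ) + 1 := by push_cast; linarith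
          have h3 : (-k : ℤ) < m' (-α) + 1 := by exact_mod_cast this
          omega
      · refine ⟨⟨α, k⟩, ?_, rfl⟩
        rw [Finset.mem_coe, hTmem]
        obtain ⟨xs, hxs⟩ := hS
        obtain ⟨xs', hxs'⟩ := hS'
        have hb1 := (hm α hαR xs hxs).1
        have hb2 := (hm' α hαR xs' hxs').2
        have hk1 := h1 xs hxs
        have hk2 := h2 xs' hxs'
        refine ⟨hαR, ?_, ?_⟩
        · show m α < k
          exact_mod_cast (by linarith : ((m α : ℤ) : ℝ) < ((k : ℤ) : ℝ))
        · show k ≤ m' α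
          have : ((k : ℤ) : ℝ) < ((m' α : ℤ) : ℝ) + 1 := by linarith
          have h3 : (k : ℤ) < m' α + 1 := by exact_mod_cast this
          omega
    · rintro ⟨p, hp, rfl⟩
      rw [Finset.mem_coe] at hp
      have h1 := (hTmem p).1 hp
      refine ⟨⟨p.1, h1.1, p.2, rfl⟩, p.1, h1.1, p.2, rfl, Or.inr ⟨?_, ?_⟩⟩
      · exact fun x hx => factS p hp x hx
      · exact fun x hx => factS' p hp x hx
  have hinj : Set.InjOn e (T : Set (Σ _ : U →ₗ[ℝ] ℝ, ℤ)) := by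
    rintro ⟨α, k⟩ hp ⟨β, l⟩ hq heq
    rw [Finset.mem_coe] at hp hq
    have hα := ((hTmem ⟨α, k⟩).1 hp).1
    have hβ := ((hTmem ⟨β, l⟩).1 hq).1
    dsimp only at hα hβ
    rcases hyperplane_rigidity hR0 hreduced hα hβ heq with ⟨h1, h2⟩ | ⟨h1, h2⟩
    · dsimp only at h1 h2
      subst h1; subst h2; rfl
    · dsimp only at h1 h2
      exfalso
      obtain ⟨xs, hxs⟩ := hS
      have f1 : α xs < (k : ℝ) := factS ⟨α, k⟩ hp xs hxs
      have f2 : β xs < (l : ℝ) := factS ⟨β, l⟩ hq xs hxs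
      rw [h1, h2] at f2
      simp only [LinearMap.neg_apply, Int.cast_neg] at f2
      linarith
  have : sepCount (R : Set (U →ₗ[ℝ] ℝ)) S S' = (e '' (T : Set (Σ _ : U →ₗ[ℝ] ℝ, ℤ))).ncard := by
    rw [sepCount, hset]
  rw [this, Set.ncard_image_of_injOn hinj, Set.ncard_coe_finset, hT, Finset.card_sigma]
  exact Finset.sum_congr rfl fun α _ => Int.card_Ioc _ _

end CountLemma

/-- The length identity `ℓ(t_λ) = ℓ(t_λ θ) + ℓ(θ)` for a triple `(F, λ, 𝒞)` in good
position (Proposition 4.4 of the paper), expressed by counting separating walls. -/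
theorem sepCount_translation_eq_of_good_position
    {U : Type*} [NormedAddCommGroup U] [NormedSpace ℝ U] [FiniteDimensional ℝ U]
    (R : Finset (U →ₗ[ℝ] ℝ))
    (hR0 : (0 : U →ₗ[ℝ] ℝ) ∉ R)
    (hRneg : ∀ α ∈ R, -α ∈ R)
    (hcoroot : ∀ α ∈ R, ∃ αv : U, α αv = 2 ∧
      ∀ β ∈ R, (β - (β αv) • α) ∈ R ∧ ∃ m : ℤ, β αv = (m : ℝ))
    (hreduced : ∀ α ∈ R, ∀ β ∈ R, ∀ c : ℝ, β = c • α → β = α ∨ β = -α)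
    (θ : U ≃ᵃ[ℝ] U)
    (hθH : (fun H : Set U => (θ : U → U) '' H) '' rootHyperplanes (R : Set (U →ₗ[ℝ] ℝ))
      = rootHyperplanes (R : Set (U →ₗ[ℝ] ℝ)))
    (F : Set U) (hF : IsFacette (R : Set (U →ₗ[ℝ] ℝ)) F) (hθF : (θ : U → U) '' F = F)
    (lam : U) (hlam : ∀ α ∈ R, ∃ m : ℤ, α lam = (m : ℝ))
    (C : Set U) (hC : IsAlcove (R : Set (U →ₗ[ℝ] ℝ)) C) (hFC : F ⊆ closure C)
    -- good position: every α ∈ R_{F,θ} satisfies α(λ) > 0 :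
    (hgood : ∀ α : U →ₗ[ℝ] ℝ, α ∈ R →
      (∃ k : ℤ, (∀ x ∈ F, α x = (k : ℝ)) ∧
        (∀ x ∈ C, (k : ℝ) < α x) ∧ (∀ x ∈ C, α (θ x) < (k : ℝ))) →
      0 < α lam) :
    sepCount (R : Set (U →ₗ[ℝ] ℝ)) C ((fun x => lam + x) '' C)
      = sepCount (R : Set (U →ₗ[ℝ] ℝ)) C ((fun x => lam + x) '' ((θ : U → U) '' C))
        + sepCount (R : Set (U →ₗ[ℝ] ℝ)) C ((θ : U → U) '' C) := by

  classical
  obtain ⟨x₀, hx₀mem, hCdef⟩ := hC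
  set Ω : Set U := ⋃₀ rootHyperplanes (R : Set (U →ₗ[ℝ] ℝ)) with hΩ
  have hCsub : C ⊆ Ωᶜ := hCdef ▸ connectedComponentIn_subset _ _
  have hCconn : IsPreconnected C := by
    rw [hCdef]
    exact (isConnected_connectedComponentIn_iff.mpr hx₀mem).isPreconnected
  have hx₀C : x₀ ∈ C := hCdef ▸ mem_connectedComponentIn hx₀mem
  have hCne : C.Nonempty := ⟨x₀, hx₀C⟩
  have θcont : Continuous (θ : U → U) := θ.toAffineMap.continuous_of_finiteDimensional
  -- θ preserves Ω
  have hθΩ : (θ : U → U) '' Ω = Ω := by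
    rw [hΩ, Set.image_sUnion, hθH]
  have hθCsub : (θ : U → U) '' C ⊆ Ωᶜ := by
    rintro x ⟨y, hy, rfl⟩ hmem
    rw [← hθΩ] at hmem
    obtain ⟨z, hz, hzy⟩ := hmem
    have : z = y := θ.injective hzy
    exact hCsub hy (this ▸ hz)
  have hθCconn : IsPreconnected ((θ : U → U) '' C) := hCconn.image _ θcont.continuousOn
  have hθx₀ : (θ : U → U) x₀ ∈ (θ : U → U) '' C := mem_image_of_mem _ hx₀C
  have hθCne : ((θ : U → U) '' C).Nonempty := ⟨_, hθx₀⟩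
  -- separation from hyperplanes
  have hsepgen : ∀ S : Set U, S ⊆ Ωᶜ → ∀ x ∈ S, ∀ α ∈ R, ∀ k : ℤ, α x ≠ (k : ℝ) := by
    intro S hSsub x hx α hα k hxk
    exact hSsub hx ⟨rootHyperplane α k, ⟨α, hα, k, rfl⟩, hxk⟩
  -- integer data
  set a : (U →ₗ[ℝ] ℝ) → ℤ := fun α => ⌊α lam⌋ with ha
  set mC : (U →ₗ[ℝ] ℝ) → ℤ := fun α => ⌊α x₀⌋ with hmCdef
  set mθ : (U →ₗ[ℝ] ℝ) → ℤ := fun α => ⌊α ((θ : U → U) x₀)⌋ with hmθdef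
  have hacast : ∀ α ∈ R, ((a α : ℤ) : ℝ) = α lam := by
    intro α hα
    obtain ⟨n, hn⟩ := hlam α hα
    rw [ha]; simp [hn, Int.floor_intCast]
  have hmC : ∀ α ∈ R, ∀ x ∈ C, ((mC α : ℤ) : ℝ) < α x ∧ α x < ((mC α : ℤ) : ℝ) + 1 :=
    fun α hα => strip_of_preconnected hCconn α
      (fun x hx k => hsepgen C hCsub x hx α hα k) hx₀C
  have hmθ : ∀ α ∈ R, ∀ x ∈ (θ : U → U) '' C,
      ((mθ α : ℤ) : ℝ) < α x ∧ α x < ((mθ α : ℤ) : ℝ) + 1 :=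
    fun α hα => strip_of_preconnected hθCconn α
      (fun x hx k => hsepgen _ hθCsub x hx α hα k) hθx₀
  -- strips for translated sets
  have hmlamC : ∀ α ∈ R, ∀ x ∈ (fun x => lam + x) '' C,
      ((mC α + a α : ℤ) : ℝ) < α x ∧ α x < ((mC α + a α : ℤ) : ℝ) + 1 := by
    rintro α hα x ⟨y, hy, rfl⟩
    have h1 := hmC α hα y hy
    have h2 := hacast α hα
    rw [map_add]
    push_cast
    constructor <;> linarith
  have hmlamθC : ∀ α ∈ R, ∀ x ∈ (fun x => lam + x) '' ((θ : U → U) '' C),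
      ((mθ α + a α : ℤ) : ℝ) < α x ∧ α x < ((mθ α + a α : ℤ) : ℝ) + 1 := by
    rintro α hα x ⟨y, hy, rfl⟩
    have h1 := hmθ α hα y hy
    have h2 := hacast α hα
    rw [map_add]
    push_cast
    constructor <;> linarith
  have hlamCne : ((fun x => lam + x) '' C).Nonempty := hCne.image _
  have hlamθCne : ((fun x => lam + x) '' ((θ : U → U) '' C)).Nonempty := hθCne.image _
  -- the three counts
  rw [sepCount_eq_sum hR0 hRneg hreduced hCne hlamCne mC (fun α => mC α + a α) hmC hmlamC,
    sepCount_eq_sum hR0 hRneg hreduced hCne hlamθCne mC (fun α => mθ α + a α) hmC hmlamθC,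
    sepCount_eq_sum hR0 hRneg hreduced hCne hθCne mC mθ hmC hmθ]
  -- facette analysis
  obtain ⟨w₀, hFdef⟩ := hF
  have hw₀F : w₀ ∈ F := by rw [hFdef]; intro α hα k; exact ⟨Iff.rfl, Iff.rfl⟩
  have hw₀clC : w₀ ∈ closure C := hFC hw₀F
  have hw₀clθC : w₀ ∈ closure ((θ : U → U) '' C) := by
    have : w₀ ∈ (θ : U → U) '' F := hθF.symm ▸ hw₀F
    obtain ⟨v, hv, rfl⟩ := this
    exact image_closure_subset_closure_image θcont (mem_image_of_mem _ (hFC hv))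
  have hbound : ∀ α ∈ R, ∀ (S : Set U) (n : ℤ), w₀ ∈ closure S →
      (∀ x ∈ S, ((n : ℤ) : ℝ) < α x ∧ α x < ((n : ℤ) : ℝ) + 1) →
      ((n : ℤ) : ℝ) ≤ α w₀ ∧ α w₀ ≤ ((n : ℤ) : ℝ) + 1 := by
    intro α hα S n hw hstrip
    have hcont : Continuous α := α.continuous_of_finiteDimensional
    have hsub : closure S ⊆ α ⁻¹' (Set.Icc ((n : ℝ)) ((n : ℝ) + 1)) :=
      closure_minimal (fun x hx => ⟨(hstrip x hx).1.le, (hstrip x hx).2.le⟩)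
        (isClosed_Icc.preimage hcont)
    exact hsub hw
  -- key trichotomy
  have hP : ∀ α ∈ R, (mθ α - mC α = 0) ∨ (mθ α - mC α = -1 ∧ 1 ≤ a α)
      ∨ (mθ α - mC α = 1 ∧ a α ≤ -1) := by
    intro α hα
    obtain ⟨hb1, hb2⟩ := hbound α hα C (mC α) hw₀clC (hmC α hα)
    obtain ⟨hb3, hb4⟩ := hbound α hα _ (mθ α) hw₀clθC (hmθ α hα)
    have hd1 : mθ α ≤ mC α + 1 := by
      have : ((mθ α : ℤ) : ℝ) ≤ ((mC α : ℤ) : ℝ) + 1 := le_trans hb3 hb2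
      exact_mod_cast this
    have hd2 : mC α ≤ mθ α + 1 := by
      have : ((mC α : ℤ) : ℝ) ≤ ((mθ α : ℤ) : ℝ) + 1 := le_trans hb1 hb4
      exact_mod_cast this
    rcases lt_trichotomy (mθ α) (mC α) with hlt | heq | hgt
    · -- d = -1
      have hdeq : mθ α = mC α - 1 := by omega
      right; left
      refine ⟨by omega, ?_⟩
      have hzval : α w₀ = ((mC α : ℤ) : ℝ) := by
        have : ((mθ α : ℤ) : ℝ) + 1 = ((mC α : ℤ) : ℝ) := by
          rw [hdeq]; push_cast; ring
        linarith
      have hpos := hgood α hα ⟨mC α, ?_, fun x hx => (hmC α hα x hx).1, ?_⟩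
      · have : (0 : ℝ) < ((a α : ℤ) : ℝ) := by rw [hacast α hα]; exact hpos
        have : (0 : ℤ) < a α := by exact_mod_cast this
        omega
      · intro x hxF
        rw [hFdef] at hxF
        exact ((hxF α (by exact_mod_cast hα) (mC α)).1).mp hzval
      · intro x hx
        have h5 := (hmθ α hα _ (mem_image_of_mem _ hx)).2
        have : ((mθ α : ℤ) : ℝ) + 1 = ((mC α : ℤ) : ℝ) := by
          rw [hdeq]; push_cast; ring
        linarith
    · left; omega
    · -- d = 1
      have hdeq : mθ α = mC α + 1 := by omega
      right; right
      refine ⟨by omega, ?_⟩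
      have hzval : α w₀ = ((mC α : ℤ) : ℝ) + 1 := by
        have : ((mθ α : ℤ) : ℝ) = ((mC α : ℤ) : ℝ) + 1 := by
          rw [hdeq]; push_cast; ring
        linarith
      have hnegR : -α ∈ R := hRneg α hα
      have hpos := hgood (-α) hnegR ⟨-(mC α) - 1, ?_, ?_, ?_⟩
      · have hc : (0 : ℝ) < -((a α : ℤ) : ℝ) := by
          rw [hacast α hα]
          simpa using hpos
        have : (0 : ℤ) < -(a α) := by exact_mod_cast hc
        omega
      · intro x hxF
        rw [hFdef] at hxF
        have h6 : α x = ((mC α + 1 : ℤ) : ℝ) := by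
          refine ((hxF α (by exact_mod_cast hα) (mC α + 1)).1).mp ?_
          rw [hzval]; push_cast; ring
        simp only [LinearMap.neg_apply]
        rw [h6]; push_cast; ring
      · intro x hx
        have h5 := (hmC α hα x hx).2
        simp only [LinearMap.neg_apply]
        push_cast
        linarith
      · intro x hx
        have h5 := (hmθ α hα _ (mem_image_of_mem _ hx)).1
        simp only [LinearMap.neg_apply]
        rw [hdeq] at h5
        push_cast at h5 ⊢
        linarith
  -- negation relations
  have hnegne : ∀ α ∈ R, -α ≠ α := by
    intro α hα heq
    apply hR0
    have : α = 0 := by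
      ext x
      have := congrArg (fun f : U →ₗ[ℝ] ℝ => f x) heq
      simp only [LinearMap.neg_apply, LinearMap.zero_apply] at this ⊢
      linarith
    exact this ▸ hα
  have haneg : ∀ α ∈ R, a (-α) = -(a α) := by
    intro α hα
    obtain ⟨n, hn⟩ := hlam α hα
    rw [ha]
    simp only [LinearMap.neg_apply, hn]
    rw [← Int.cast_neg, Int.floor_intCast, Int.floor_intCast]
  have hfloorneg : ∀ (r : ℝ) (n : ℤ), (n : ℝ) < r → r < (n : ℝ) + 1 → ⌊-r⌋ = -n - 1 := by
    intro r n h1 h2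
    rw [Int.floor_eq_iff]
    constructor
    · push_cast; linarith
    · push_cast; linarith
  have hmCneg : ∀ α ∈ R, mC (-α) = -(mC α) - 1 := by
    intro α hα
    have := hmC α hα x₀ hx₀C
    rw [hmCdef]
    simp only [LinearMap.neg_apply]
    exact hfloorneg _ _ this.1 this.2
  have hmθneg : ∀ α ∈ R, mθ (-α) = -(mθ α) - 1 := by
    intro α hα
    have := hmθ α hα _ hθx₀
    rw [hmθdef]
    simp only [LinearMap.neg_apply]
    exact hfloorneg _ _ this.1 this.2
  -- final arithmetic
  have key : ∑ α ∈ R, (((a α).toNat : ℤ) - ((mθ α + a α - mC α).toNat : ℤ)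
      - ((mθ α - mC α).toNat : ℤ)) = 0 := by
    refine Finset.sum_involution (fun α _ => -α) ?_ (fun α hα _ => hnegne α hα)
      (fun α hα => hRneg α hα) (fun α hα => neg_neg α)
    intro α hα
    have h1 := haneg α hα
    have h2 := hmCneg α hα
    have h3 := hmθneg α hα
    rw [h1, h2, h3]
    rcases hP α hα with h | ⟨h, h'⟩ | ⟨h, h'⟩ <;> omega
  rw [Finset.sum_sub_distrib, Finset.sum_sub_distrib, sub_sub, sub_eq_zero] at key
  have key2 : ((∑ α ∈ R, (a α).toNat : ℕ) : ℤ)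
      = ((∑ α ∈ R, (mθ α + a α - mC α).toNat + ∑ α ∈ R, (mθ α - mC α).toNat : ℕ) : ℤ) := by
    push_cast
    exact key
  have key3 := Int.ofNat.inj key2
  calc ∑ α ∈ R, (mC α + a α - mC α).toNat = ∑ α ∈ R, (a α).toNat := by
        refine Finset.sum_congr rfl fun α _ => ?_; congr 1; omega
    _ = ∑ α ∈ R, (mθ α + a α - mC α).toNat + ∑ α ∈ R, (mθ α - mC α).toNat := by
        exact_mod_cast key2
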